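/- For all integers d ≥ 1, 0 ≤ k ≤ d and 0 ≤ j ≤ d, the refined Eulerian number satisfies A_{d+1,k,d-j+1} = Σ_{i=0}^{k} (-1)^i · C(d+1,i) · (k-i)^j · (k-i+1)^{d-j}, where A_{d+1,k,d-j+1} is defined as the coefficient of λ^j in d!·(λ+1)^d·B_{d+1}(k + 1/(λ+1)), divided by C(d,j). -/

import Mathlib

/-!
Integrating the truncated powers `(x - i)₊ ^ n` over a unit interval and using Pascal's rule
gives the classical closed form `d! B_{d+1}(x) = ∑ᵢ (-1)ⁱ C(d+1, i) (x - i)₊ ^ d`.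
For `λ > 0` the point `x = k + 1/(λ+1)` lies in `(k, k+1)`, so only the terms with `i ≤ k`
survive, and `(λ+1)(x - i) = (k - i) λ + (k - i + 1)`. Hence `p` agrees on `(0, ∞)`, and so
everywhere, with `∑_{i ≤ k} (-1)ⁱ C(d+1, i) ((k - i) λ + (k - i + 1)) ^ d`, whose coefficients
come from the binomial theorem.
-/

open MeasureTheory

/-- B-splines: `B 1` is the indicator of `[0,1)`, and `B d x = ∫_0^1 B (d-1) (x - t) dt`. -/
noncomputable def B : ℕ → ℝ → ℝ
  | 0, _ => 0
  | 1, x => if 0 ≤ x ∧ x < 1 then 1 else 0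
  | d + 2, x => ∫ t in (0:ℝ)..(1:ℝ), B (d + 1) (x - t)

open Polynomial Finset Nat

/-- `truncPow 0` is the indicator of `[0, ∞)`: this matches the half-open support of `B 1` and
makes the closed form of `B` hold already for `d = 0`. -/
noncomputable def truncPow (n : ℕ) (x : ℝ) : ℝ := if 0 ≤ x then x ^ n else 0

lemma truncPow_of_nonneg {n : ℕ} {x : ℝ} (hx : 0 ≤ x) : truncPow n x = x ^ n := if_pos hx

lemma truncPow_of_neg {n : ℕ} {x : ℝ} (hx : x < 0) : truncPow n x = 0 := if_neg hx.not_ge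

lemma monotone_truncPow (n : ℕ) : Monotone (truncPow n) := by
  intro x y hxy
  unfold truncPow
  split_ifs with hx hy hy
  · exact pow_le_pow_left₀ hx hxy n
  · exact absurd (hx.trans hxy) hy
  · positivity
  · rfl

lemma integral_truncPow (n : ℕ) (b : ℝ) :
    ∫ u in (0 : ℝ)..b, truncPow n u = truncPow (n + 1) b / (n + 1) := by
  rcases le_or_gt 0 b with hb | hb
  · have hpow : Set.EqOn (truncPow n) (· ^ n) (Set.uIcc 0 b) := fun u hu =>
      truncPow_of_nonneg (Set.uIcc_of_le hb ▸ hu).1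
    rw [intervalIntegral.integral_congr hpow, integral_pow, truncPow_of_nonneg hb]
    simp
  · rw [truncPow_of_neg hb, zero_div]
    refine (intervalIntegral.integral_congr_ae ?_).trans intervalIntegral.integral_zero
    -- only almost everywhere: `truncPow 0 0 = 1`
    filter_upwards [volume.ae_ne 0] with u hu0 hu
    rw [Set.uIoc_of_ge hb.le] at hu
    exact truncPow_of_neg (lt_of_le_of_ne hu.2 hu0)

lemma integral_truncPow_sub (n : ℕ) (a : ℝ) :
    ∫ t in (0 : ℝ)..1, truncPow n (a - t) =
      (truncPow (n + 1) a - truncPow (n + 1) (a - 1)) / (n + 1) := by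
  have hint : ∀ b c : ℝ, IntervalIntegrable (truncPow n) volume b c :=
    fun _ _ => (monotone_truncPow n).intervalIntegrable
  rw [intervalIntegral.integral_comp_sub_left, sub_zero,
    ← intervalIntegral.integral_interval_sub_left (hint 0 a) (hint 0 (a - 1)),
    integral_truncPow, integral_truncPow, sub_div]

lemma B_one_eq (x : ℝ) : B 1 x = truncPow 0 x - truncPow 0 (x - 1) := by
  simp only [B, truncPow, pow_zero, sub_nonneg]
  split_ifs <;> grind

lemma sum_alternating_choose_mul_sub {R : Type*} [CommRing R] (n : ℕ) (m : ℕ → R) :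
    ∑ i ∈ range (n + 1), (-1) ^ i * (n.choose i : R) * (m i - m (i + 1)) =
      ∑ i ∈ range (n + 2), (-1) ^ i * ((n + 1).choose i : R) * m i := by
  calc _ = ∑ i ∈ range (n + 1), (-1) ^ i * (n.choose i : R) * m i
        - ∑ i ∈ range (n + 1), (-1) ^ i * (n.choose i : R) * m (i + 1) := by
        simp only [mul_sub, sum_sub_distrib]
    _ = ∑ i ∈ range (n + 2), (-1) ^ i * (n.choose i : R) * m i
        - ∑ i ∈ range (n + 1), (-1) ^ i * (n.choose i : R) * m (i + 1) := by
        simp [sum_range_succ _ (n + 1)]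
    _ = _ := by
        rw [sum_range_succ' _ (n + 1), sum_range_succ' _ (n + 1)]
        simp only [Nat.choose_succ_succ', Nat.cast_add, pow_succ, add_mul, mul_add, sum_add_distrib]
        simp only [mul_neg, mul_one, neg_mul, sum_neg_distrib, pow_zero, choose_zero_right,
          cast_one, one_mul]
        ring

lemma coeff_C_mul_X_add_C_pow {R : Type*} [CommSemiring R] (a b : R) (n k : ℕ) :
    ((C a * X + C b) ^ n).coeff k = n.choose k * a ^ k * b ^ (n - k) := by
  have hterm : ∀ m ∈ range (n + 1), (C a * X) ^ m * C b ^ (n - m) * (n.choose m : R[X]) =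
      C (n.choose m * a ^ m * b ^ (n - m)) * X ^ m := by
    intro m _
    simp only [mul_pow, ← C_pow, ← C_eq_natCast, C_mul]
    ring
  rw [add_pow, sum_congr rfl hterm, finsetSum_coeff]
  simp only [coeff_C_mul_X_pow, sum_ite_eq, mem_range]
  split_ifs with hk
  · rfl
  · rw [Nat.choose_eq_zero_of_lt (by omega), Nat.cast_zero, zero_mul, zero_mul]

theorem factorial_mul_B_succ (d : ℕ) (x : ℝ) :
    (d ! : ℝ) * B (d + 1) x =
      ∑ i ∈ range (d + 2), (-1) ^ i * ((d + 1).choose i : ℝ) * truncPow d (x - i) := by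
  induction d generalizing x with
  | zero => simp [sum_range_succ, B_one_eq, sub_eq_add_neg]
  | succ d ih =>
    have hint : ∀ i : ℕ, IntervalIntegrable (fun t => truncPow d (x - i - t)) volume 0 1 :=
      fun i => ((monotone_truncPow d).comp_antitone fun s t hst => by
        linarith).intervalIntegrable
    have ih_shift : ∀ t : ℝ, (d ! : ℝ) * B (d + 1) (x - t) =
        ∑ i ∈ range (d + 2), (-1) ^ i * ((d + 1).choose i : ℝ) * truncPow d (x - i - t) :=
      fun t => by simp_rw [ih, sub_right_comm x t]
    calc ((d + 1) ! : ℝ) * B (d + 1 + 1) x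
        = (d + 1) * ∫ t in (0 : ℝ)..1, (d ! : ℝ) * B (d + 1) (x - t) := by
          rw [B, intervalIntegral.integral_const_mul, Nat.factorial_succ]; push_cast; ring
      _ = (d + 1) * ∑ i ∈ range (d + 2), (-1) ^ i * ((d + 1).choose i : ℝ) *
            ∫ t in (0 : ℝ)..1, truncPow d (x - i - t) := by
          simp_rw [ih_shift]
          rw [intervalIntegral.integral_finsetSum fun i _ => (hint i).const_mul _]
          simp_rw [intervalIntegral.integral_const_mul]
      _ = ∑ i ∈ range (d + 2), (-1) ^ i * ((d + 1).choose i : ℝ) *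
            (truncPow (d + 1) (x - i) - truncPow (d + 1) (x - ↑(i + 1))) := by
          simp_rw [integral_truncPow_sub, mul_sum]
          refine sum_congr rfl fun i _ => ?_
          rw [Nat.cast_succ, ← sub_sub]
          field_simp
      _ = _ := sum_alternating_choose_mul_sub (d + 1) fun i => truncPow (d + 1) (x - i)

theorem factorial_mul_B_succ_eq_sum_pow (d k : ℕ) {x : ℝ} (hkx : k ≤ x) (hxk : x < k + 1) :
    (d ! : ℝ) * B (d + 1) x =
      ∑ i ∈ range (k + 1), (-1) ^ i * ((d + 1).choose i : ℝ) * (x - i) ^ d := by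
  rw [factorial_mul_B_succ, sum_subset (range_subset_range.mpr (by omega : d + 2 ≤ d + k + 2)),
    ← sum_subset (range_subset_range.mpr (by omega : k + 1 ≤ d + k + 2))]
  · refine sum_congr rfl fun i hi => ?_
    have : (i : ℝ) ≤ k := by exact_mod_cast Nat.lt_succ_iff.mp (mem_range.mp hi)
    rw [truncPow_of_nonneg (by linarith)]
  · intro i _ hi
    have : (k : ℝ) + 1 ≤ i := by exact_mod_cast not_lt.mp (mt mem_range.mpr hi)
    rw [truncPow_of_neg (by linarith), mul_zero]
  · intro i _ hi
    rw [Nat.choose_eq_zero_of_lt (by simp only [mem_range] at hi; omega), Nat.cast_zero,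
      mul_zero, zero_mul]

noncomputable def splinePoly (d k : ℕ) : ℝ[X] :=
  ∑ i ∈ range (k + 1),
    C ((-1) ^ i * ((d + 1).choose i : ℝ)) * (C ((k : ℝ) - i) * X + C ((k : ℝ) - i + 1)) ^ d

theorem eval_splinePoly (d k : ℕ) {lam : ℝ} (hlam : 0 < lam) :
    (splinePoly d k).eval lam = (d ! : ℝ) * (lam + 1) ^ d * B (d + 1) (k + 1 / (lam + 1)) := by
  have hfrac_pos : 0 < 1 / (lam + 1) := by positivity
  have hfrac_lt_one : 1 / (lam + 1) < 1 := (div_lt_one (by positivity)).mpr (by linarith)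
  rw [mul_right_comm, factorial_mul_B_succ_eq_sum_pow d k (by linarith) (by linarith), sum_mul,
    splinePoly, eval_finsetSum]
  refine sum_congr rfl fun i _ => ?_
  have hlin : ((k : ℝ) - i) * lam + (k - i + 1) = (k + 1 / (lam + 1) - i) * (lam + 1) := by
    field_simp
    ring
  simp only [eval_mul, eval_pow, eval_add, eval_C, eval_X]
  rw [hlin, mul_pow]
  ring

theorem refined_eulerian_formula_general (d k j : ℕ) (hj : j ≤ d)
    (p : Polynomial ℝ)
    (hp : ∀ lam : ℝ, 0 ≤ lam →
      Polynomial.eval lam p =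
        (Nat.factorial d : ℝ) * (lam + 1) ^ d * B (d + 1) ((k : ℝ) + 1 / (lam + 1))) :
    p.coeff j / (d.choose j : ℝ) =
      ∑ i ∈ Finset.range (k + 1), (-1 : ℝ) ^ i * ((d + 1).choose i : ℝ) *
        ((k : ℝ) - i) ^ j * ((k : ℝ) - i + 1) ^ (d - j) := by
  have hp_eq : p = splinePoly d k := eq_of_infinite_eval_eq _ _ <| (Set.Ioi_infinite 0).mono
    fun lam (hlam : 0 < lam) => (hp lam hlam.le).trans (eval_splinePoly d k hlam).symm
  have hchoose : (d.choose j : ℝ) ≠ 0 := Nat.cast_ne_zero.mpr (Nat.choose_pos hj).ne'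
  rw [hp_eq, splinePoly, finsetSum_coeff, sum_div]
  refine sum_congr rfl fun i _ => ?_
  rw [coeff_C_mul, coeff_C_mul_X_add_C_pow]
  field_simp

theorem refined_eulerian_formula (d k j : ℕ) (hd : 1 ≤ d) (hk : k ≤ d) (hj : j ≤ d)
    (p : Polynomial ℝ)
    (hp : ∀ lam : ℝ, 0 ≤ lam →
      Polynomial.eval lam p =
        (Nat.factorial d : ℝ) * (lam + 1) ^ d * B (d + 1) ((k : ℝ) + 1 / (lam + 1))) :
    p.coeff j / (d.choose j : ℝ) =
      ∑ i ∈ Finset.range (k + 1), (-1 : ℝ) ^ i * ((d + 1).choose i : ℝ) *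
        ((k : ℝ) - i) ^ j * ((k : ℝ) - i + 1) ^ (d - j) :=
  refined_eulerian_formula_general d k j hj p hp
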